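/- arXiv:2103.03314 — 8 statements merged into one kernel-verified Lean document; each statement's English description precedes it below -/
import Mathlib

section
/- Let I be a finite set partitioned into nonempty groups G1,...,Gm, and let W be a finite family of subsets of I with integer values v_W (positive or negative). For a transversal J define Q(J) = Σ_{W ⊆ J} v_W. Split W into W_P = {W : v_W > 0} and W_N = {W : v_W < 0}. Consider the weighted formula with hard clauses enforcing exactly one element per group; for each W ∈ W_P a soft clause (∨_{f_i ∈ W} ¬x_i) of weight v_W; and for each W ∈ W_N a fresh variable y_W with hard clauses enforcing y_W ↔ (∧_{f_i ∈ W} x_i) and a soft clause (y_W) of weight |v_W|. Then for any assignment s satisfying all hard clauses, with transversal J_s, we have Q(J_s) = (Σ_{W ∈ W_P} v_W) − g(s), where g(s) is the total weight of soft clauses satisfied by s. -/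
open Finset

/-- `s` satisfies the hard group clauses: exactly one variable true per group. -/
def SatHard {F γ : Type*} (g : F → γ) (s : F → Bool) : Prop :=
  (∀ j : γ, ∃ f, g f = j ∧ s f = true) ∧
  (∀ u v : F, u ≠ v → g u = g v → ¬(s u = true ∧ s v = true))

/-- The repair (transversal) corresponding to an assignment `s`. -/
def repOf {F : Type*} [Fintype F] [DecidableEq F] (s : F → Bool) : Finset F :=
  Finset.univ.filter (fun f => s f = true)

/-- `Q(J) = Σ_{W ⊆ J} v_W` with integer values. -/
def QvalZ {F ι : Type*} [Fintype ι] [DecidableEq F]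
    (w : ι → Finset F) (v : ι → ℤ) (J : Finset F) : ℤ :=
  ∑ W : ι, if w W ⊆ J then v W else 0

/-- Total weight `g(s)` of the satisfied soft clauses: for `W ∈ W_P` the clause
`(∨_{f ∈ W} ¬x_f)` of weight `v_W`, and for `W ∈ W_N` the clause `(y_W)` of
weight `|v_W|` (where `t` assigns the `y`-variables). -/
def gWeight {F ι : Type*} [Fintype ι]
    (w : ι → Finset F) (v : ι → ℤ) (s : F → Bool) (t : ι → Bool) : ℤ :=
  (∑ W ∈ Finset.univ.filter (fun W => 0 < v W),
      if ∃ f ∈ w W, s f = false then v W else 0) +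
  (∑ W ∈ Finset.univ.filter (fun W => v W < 0),
      if t W = true then |v W| else 0)

/-!
Each witness `W` contributes to `Q(J_s)` exactly when all its variables are true. For `v_W > 0`
this is the complement of the event that the soft clause `(∨_{f ∈ W} ¬x_f)` is satisfied, so the
contribution is `v_W` minus the clause's weight; for `v_W < 0` it is the event `y_W`, so the
contribution is minus the weight `|v_W|` of the soft clause `(y_W)`.
-/

section

variable {F : Type*} [Fintype F] [DecidableEq F]

theorem subset_repOf_iff (W : Finset F) (s : F → Bool) :
    W ⊆ repOf s ↔ ∀ f ∈ W, s f = true := by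
  simp [Finset.subset_iff, repOf]

theorem ite_subset_repOf_eq_sub (W : Finset F) (s : F → Bool) (a : ℤ) :
    (if W ⊆ repOf s then a else 0) = a - if ∃ f ∈ W, s f = false then a else 0 := by
  have hiff : W ⊆ repOf s ↔ ¬∃ f ∈ W, s f = false := by
    simp [subset_repOf_iff]
  by_cases h : W ⊆ repOf s
  · simp [h, hiff.mp h]
  · simp [h, not_not.mp (mt hiff.mpr h)]

theorem ite_subset_repOf_eq_neg_abs (W : Finset F) (s : F → Bool) {y : Bool}
    (hy : y = true ↔ ∀ f ∈ W, s f = true) {a : ℤ} (ha : a < 0) :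
    (if W ⊆ repOf s then a else 0) = -if y = true then |a| else 0 := by
  rw [← subset_repOf_iff] at hy
  by_cases h : W ⊆ repOf s
  · simp [h, hy.mpr h, abs_of_neg ha]
  · simp [h, mt hy.mp h]

end

theorem QvalZ_eq_sum_pos_add_sum_neg {F ι : Type*} [Fintype ι] [DecidableEq F]
    (w : ι → Finset F) (v : ι → ℤ) (hv : ∀ W, v W ≠ 0) (J : Finset F) :
    QvalZ w v J =
      (∑ W ∈ univ.filter (fun W => 0 < v W), if w W ⊆ J then v W else 0) +
        ∑ W ∈ univ.filter (fun W => v W < 0), if w W ⊆ J then v W else 0 := by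
  have hnonpos : univ.filter (fun W => ¬0 < v W) = univ.filter (fun W => v W < 0) :=
    filter_congr fun W _ => not_lt.trans ⟨fun h => h.lt_of_ne (hv W), le_of_lt⟩
  rw [QvalZ, ← sum_filter_add_sum_filter_not univ (fun W => 0 < v W), hnonpos]

theorem stmt5_general {F γ ι : Type*} [Fintype F] [DecidableEq F] [Fintype ι]
    (g : F → γ)
    (w : ι → Finset F) (v : ι → ℤ) (hv : ∀ W, v W ≠ 0) :
    ∀ (s : F → Bool) (t : ι → Bool), SatHard g s →
      (∀ W : ι, v W < 0 → (t W = true ↔ ∀ f ∈ w W, s f = true)) →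
      QvalZ w v (repOf s) =
        (∑ W ∈ Finset.univ.filter (fun W => 0 < v W), v W) - gWeight w v s t := by
  intro s t _ ht
  have hpos := sum_congr rfl fun W (_ : W ∈ univ.filter (fun W => 0 < v W)) =>
    ite_subset_repOf_eq_sub (w W) s (v W)
  have hneg := sum_congr rfl fun W (hW : W ∈ univ.filter (fun W => v W < 0)) =>
    have hW : v W < 0 := (mem_filter.mp hW).2
    ite_subset_repOf_eq_neg_abs (w W) s (ht W hW) hW
  rw [QvalZ_eq_sum_pos_add_sum_neg w v hv, hpos, hneg, sum_sub_distrib, sum_neg_distrib, gWeight]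
  ring

/-- For SUM with positive and negative witness values: for any assignment `(s, t)`
satisfying the hard clauses — `s` picks exactly one fact per group and each fresh
variable `y_W` (for `W ∈ W_N`) equals the conjunction `∧_{f ∈ W} x_f` — we have
`Q(J_s) = (Σ_{W ∈ W_P} v_W) − g(s)`. -/
theorem stmt5 {F γ ι : Type*} [Fintype F] [DecidableEq F] [Fintype ι]
    (g : F → γ) (hg : ∀ j : γ, ∃ f, g f = j)
    (w : ι → Finset F) (v : ι → ℤ) (hv : ∀ W, v W ≠ 0) :
    ∀ (s : F → Bool) (t : ι → Bool), SatHard g s →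
      (∀ W : ι, v W < 0 → (t W = true ↔ ∀ f ∈ w W, s f = true)) →
      QvalZ w v (repOf s) =
        (∑ W ∈ Finset.univ.filter (fun W => 0 < v W), v W) - gWeight w v s t :=
  stmt5_general g w v hv
end

section
/- Let G = (V, E) be an undirected graph, and let I be the database instance constructed from G by the Max-Cut reduction (with m = −|E| − 1). Then for every repair J of I, there exists a repair J' of I such that J' produces a red-blue coloring of G and Q(J') ≥ Q(J), where Q is the SUM aggregation query over the underlying conjunctive query q(A) = ∃x∃y (R1(x,'red') ∧ R2(y,'blue') ∧ R3(x,'red',y,'blue',A)). -/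
/-!
Let `R2` copy the colour of `R1` at every vertex. A vertex `v` with `R1(v,'red')` and
`R2(v,'blue')` contributes `m = −|E| − 1` through its own `R3`-fact; recolouring `R2(v)` red
removes this penalty and loses only the edge witnesses `(x, v)`, at most `deg v ≤ |E|` of them.
So the answer can only grow, and the new repair is a red-blue colouring.
-/

open Finset

/-- The answer of the SUM aggregation query `Q` on the repair of the Max-Cut-reduction
instance determined by the choices `c1 c2 : V → Bool`, where `c1 v = true` means
`R1(v,'red') ∈ J` (else `R1(v,'blue') ∈ J`) and `c2 v = true` means `R2(v,'red') ∈ J`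
(else `R2(v,'blue') ∈ J`).  The witnesses of
`q(A) = ∃x∃y (R1(x,'red') ∧ R2(y,'blue') ∧ R3(x,'red',y,'blue',A))` contribute:
`1` for each ordered pair `(x, y)` of adjacent vertices with `c1 x` red and `c2 y` blue,
and `m = −|E| − 1` for each vertex `v` with `c1 v` red and `c2 v` blue. -/
def Qagg {V : Type*} [Fintype V] [DecidableEq V]
    (G : SimpleGraph V) [DecidableRel G.Adj] (c1 c2 : V → Bool) : ℤ :=
  (∑ p : V × V,
      if G.Adj p.1 p.2 ∧ c1 p.1 = true ∧ c2 p.2 = false then (1 : ℤ) else 0) +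
  (∑ v : V,
      if c1 v = true ∧ c2 v = false then (-(G.edgeFinset.card : ℤ) - 1) else 0)

namespace MaxCutReduction

variable {V : Type*} [Fintype V] (G : SimpleGraph V) [DecidableRel G.Adj]

def redBluePairs (c1 c2 : V → Bool) : ℤ :=
  ∑ p : V × V, if G.Adj p.1 p.2 ∧ c1 p.1 = true ∧ c2 p.2 = false then 1 else 0

def redBlueVertices (c1 c2 : V → Bool) : Finset V :=
  {v | c1 v = true ∧ c2 v = false}

theorem redBlueVertices_self (c : V → Bool) : redBlueVertices c c = ∅ := by
  ext v
  simp [redBlueVertices]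

theorem qagg_eq [DecidableEq V] (c1 c2 : V → Bool) :
    Qagg G c1 c2 =
      redBluePairs G c1 c2 - #(redBlueVertices c1 c2) * (#G.edgeFinset + 1) := by
  have penalty : (∑ v, if c1 v = true ∧ c2 v = false then -(#G.edgeFinset : ℤ) - 1 else 0) =
      #(redBlueVertices c1 c2) * (-(#G.edgeFinset : ℤ) - 1) := by
    rw [← sum_filter, sum_const, nsmul_eq_mul, redBlueVertices]
  rw [Qagg, penalty, redBluePairs]
  ring

theorem sum_adj_boole (y : V) : (∑ x, if G.Adj x y then (1 : ℤ) else 0) = G.degree y := by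
  simp [sum_boole, ← SimpleGraph.card_neighborFinset_eq_degree,
    SimpleGraph.neighborFinset_eq_filter, SimpleGraph.adj_comm]

theorem redBluePairs_le (c1 c2 : V → Bool) :
    redBluePairs G c1 c2 ≤
      redBluePairs G c1 c1 + ∑ y ∈ redBlueVertices c1 c2, (G.degree y : ℤ) := by
  have pair_le (x y : V) :
      (if G.Adj x y ∧ c1 x = true ∧ c2 y = false then (1 : ℤ) else 0) ≤
        (if G.Adj x y ∧ c1 x = true ∧ c1 y = false then 1 else 0) +
          if c1 y = true ∧ c2 y = false then (if G.Adj x y then 1 else 0) else 0 := by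
    cases c1 y <;> cases c2 y <;> split_ifs <;> simp_all
  calc redBluePairs G c1 c2
      ≤ ∑ p : V × V, ((if G.Adj p.1 p.2 ∧ c1 p.1 = true ∧ c1 p.2 = false then (1 : ℤ) else 0) +
          if c1 p.2 = true ∧ c2 p.2 = false then (if G.Adj p.1 p.2 then 1 else 0) else 0) :=
        sum_le_sum fun p _ => pair_le p.1 p.2
    _ = redBluePairs G c1 c1 + ∑ y ∈ redBlueVertices c1 c2, (G.degree y : ℤ) := by
        rw [sum_add_distrib, redBluePairs, redBlueVertices, sum_filter]
        congr 1
        simp only [Fintype.sum_prod_type_right, sum_ite_irrel, sum_const_zero, sum_adj_boole]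

theorem sum_degree_le_card_mul [DecidableEq V] (s : Finset V) :
    ∑ y ∈ s, (G.degree y : ℤ) ≤ #s * #G.edgeFinset := by
  rw [← nsmul_eq_mul]
  exact sum_le_card_nsmul _ _ _ fun y _ => mod_cast G.degree_le_card_edgeFinset y

theorem qagg_le_qagg_self [DecidableEq V] (c1 c2 : V → Bool) : Qagg G c1 c2 ≤ Qagg G c1 c1 := by
  rw [qagg_eq, qagg_eq, redBlueVertices_self, card_empty, Nat.cast_zero]
  have pairs_le := redBluePairs_le G c1 c2
  have degrees_le := sum_degree_le_card_mul G (redBlueVertices c1 c2)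
  have card_nonneg : (0 : ℤ) ≤ #(redBlueVertices c1 c2) := Nat.cast_nonneg _
  linarith

end MaxCutReduction

/-- For every repair `J` of the Max-Cut-reduction instance, there is a repair `J'`
producing a red-blue coloring of `G` (i.e. for each vertex `v`, the facts `R1(v,'red')`
and `R2(v,'red')` are both present or both absent) with `Q(J') ≥ Q(J)`. -/
theorem stmt6 {V : Type*} [Fintype V] [DecidableEq V]
    (G : SimpleGraph V) [DecidableRel G.Adj] :
    ∀ c1 c2 : V → Bool, ∃ c1' c2' : V → Bool,
      (∀ v : V, c1' v = c2' v) ∧ Qagg G c1 c2 ≤ Qagg G c1' c2' :=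
  fun c1 c2 => ⟨c1, c1, fun _ => rfl, MaxCutReduction.qagg_le_qagg_self G c1 c2⟩
end

section
/- Let G = (V, E) be an undirected graph and I the instance from the Max-Cut reduction (with m = −|E|−1). For every non-negative integer k: there exists a cut (S, S̄) of G with |E(S, S̄)| ≥ k if and only if there exists a repair J of I that produces a red-blue coloring of G and satisfies Q(J) ≥ k, where Q(J) sums the values A over all witnesses R1(x,'red'), R2(y,'blue'), R3(x,'red',y,'blue',A) contained in J. -/
/-!
On a repair that produces a coloring, `R1(v,'red')` and `R2(v,'blue')` are never both present,
so the penalty facts `R3(v,'red',v,'blue',m)` contribute nothing and `Q(J)` counts exactly the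
edges from the red vertices to the blue ones, i.e. the cut of the red set.
-/

open Finset

/-- The size `|E(S, S̄)|` of the cut `(S, V \ S)`: the number of edges with one endpoint
in `S` and the other outside `S`. -/
def cutSize {V : Type*} [Fintype V] [DecidableEq V]
    (G : SimpleGraph V) [DecidableRel G.Adj] (S : Finset V) : ℕ :=
  (Finset.univ.filter
    (fun p : V × V => G.Adj p.1 p.2 ∧ p.1 ∈ S ∧ p.2 ∉ S)).card

section

variable {V : Type*} [Fintype V] [DecidableEq V] (G : SimpleGraph V) [DecidableRel G.Adj]

lemma Qagg_self (c : V → Bool) : Qagg G c c = cutSize G {v | c v = true} := by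
  have penalty_eq_zero : (∑ v : V,
      if c v = true ∧ c v = false then (-(#G.edgeFinset : ℤ) - 1) else 0) = 0 :=
    sum_eq_zero fun v _ => by simp
  rw [Qagg, cutSize, penalty_eq_zero, add_zero, card_filter]
  push_cast
  exact sum_congr rfl fun p _ => by simp

lemma Qagg_mem (S : Finset V) : Qagg G (· ∈ S) (· ∈ S) = cutSize G S := by
  rw [Qagg_self]
  congr
  ext v
  simp

end

/-- For every non-negative integer `k`: `G` has a cut of size at least `k` iff the
Max-Cut-reduction instance has a repair producing a red-blue coloring of `G`
(for each `v`, `R1(v,'red') ∈ J ↔ R2(v,'red') ∈ J`) with `Q(J) ≥ k`. -/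
theorem stmt7 {V : Type*} [Fintype V] [DecidableEq V]
    (G : SimpleGraph V) [DecidableRel G.Adj] :
    ∀ k : ℕ,
      (∃ S : Finset V, k ≤ cutSize G S) ↔
      (∃ c1 c2 : V → Bool, (∀ v : V, c1 v = c2 v) ∧ (k : ℤ) ≤ Qagg G c1 c2) := by
  intro k
  constructor
  · rintro ⟨S, hS⟩
    exact ⟨(· ∈ S), (· ∈ S), fun _ => rfl, by rw [Qagg_mem]; exact_mod_cast hS⟩
  · rintro ⟨c1, c2, hc, hk⟩
    obtain rfl : c1 = c2 := funext hc
    rw [Qagg_self] at hk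
    exact ⟨_, by exact_mod_cast hk⟩
end

section
/- In the Max-Cut reduction, the least upper bound over all repairs J of Q(J) equals the maximum cut size of G. Formally, max over repairs J of I of Q(J) = max over subsets S ⊆ V of |E(S, V\S)|. -/
open Finset

/-!
A repair is a pair of colourings `c1, c2 : V → Bool`. Choosing `c1 = c2 = 1_S` kills every
penalty term, and `Q` is then exactly the cut of `S`. Conversely, a vertex `v` with
`c1 v ∧ ¬ c2 v` costs `|E| + 1`, while the pairs `(u, v)` it lets in beyond the cut of
`{c1 = true}` are at most `deg v ≤ |E|`; so no repair beats the cut of `{c1 = true}`.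
-/

namespace SimpleGraph

variable {V : Type*} [Fintype V] [DecidableEq V] (G : SimpleGraph V) [DecidableRel G.Adj]

lemma card_filter_adj_snd_mem_le (T : Finset V) :
    #{p : V × V | G.Adj p.1 p.2 ∧ p.2 ∈ T} ≤ #T * #G.edgeFinset := by
  rw [← card_product]
  refine card_le_card_of_injOn (fun p => (p.2, s(p.1, p.2))) ?_ ?_
  · rintro ⟨u, v⟩ hp
    simp only [coe_filter, mem_univ, true_and, Set.mem_ofPred_eq] at hp
    simp [hp.1, hp.2]
  · rintro ⟨u, v⟩ - ⟨u', v'⟩ - h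
    simp only [Prod.mk.injEq] at h
    obtain ⟨rfl, h⟩ := h
    rw [Sym2.congr_left.1 h]

end SimpleGraph

section MaxCutReduction

variable {V : Type*} [Fintype V] [DecidableEq V] (G : SimpleGraph V) [DecidableRel G.Adj]

lemma Qagg_eq (c1 c2 : V → Bool) :
    Qagg G c1 c2 = #{p : V × V | G.Adj p.1 p.2 ∧ c1 p.1 = true ∧ c2 p.2 = false}
      - (#G.edgeFinset + 1) * #{v | c1 v = true ∧ c2 v = false} := by
  rw [Qagg, sum_boole, ← sum_filter, sum_const, nsmul_eq_mul]
  ring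

lemma card_filter_adj_le_cutSize_add (c1 c2 : V → Bool) :
    #{p : V × V | G.Adj p.1 p.2 ∧ c1 p.1 = true ∧ c2 p.2 = false}
      ≤ cutSize G {v | c1 v = true} + #{v | c1 v = true ∧ c2 v = false} * #G.edgeFinset := by
  refine (card_le_card ?_).trans ((card_union_le _ _).trans
    (add_le_add_right (G.card_filter_adj_snd_mem_le _) _))
  rintro ⟨u, v⟩ hp
  simp only [mem_filter, mem_univ, true_and] at hp
  obtain ⟨hadj, hu, hv⟩ := hp
  cases hcv : c1 v <;> simp [hadj, hu, hv, hcv]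

lemma Qagg_le_cutSize (c1 c2 : V → Bool) :
    Qagg G c1 c2 ≤ cutSize G {v | c1 v = true} := by
  have h := card_filter_adj_le_cutSize_add G c1 c2
  rw [Qagg_eq]
  zify at h
  linarith [Int.natCast_nonneg #{v | c1 v = true ∧ c2 v = false}]

lemma Qagg_indicator (S : Finset V) :
    Qagg G (fun v => decide (v ∈ S)) (fun v => decide (v ∈ S)) = cutSize G S := by
  rw [Qagg_eq, cutSize]
  simp

end MaxCutReduction

/-- In the Max-Cut reduction, the maximum of `Q(J)` over all repairs `J` of the
constructed instance equals the maximum cut size of `G`. -/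
theorem stmt8 {V : Type*} [Fintype V] [DecidableEq V]
    (G : SimpleGraph V) [DecidableRel G.Adj] :
    (Finset.univ.sup' Finset.univ_nonempty
        (fun p : (V → Bool) × (V → Bool) => Qagg G p.1 p.2)) =
    (Finset.univ.sup' Finset.univ_nonempty
        (fun S : Finset V => (cutSize G S : ℤ))) := by
  apply le_antisymm
  · refine sup'_le _ _ fun ⟨c1, c2⟩ _ => ?_
    exact (Qagg_le_cutSize G c1 c2).trans (le_sup' (fun S => (cutSize G S : ℤ)) (mem_univ _))
  · refine sup'_le _ _ fun S _ => ?_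
    rw [← Qagg_indicator]
    exact le_sup' (fun p : (V → Bool) × (V → Bool) => Qagg G p.1 p.2) (mem_univ (_, _))
end

section
/- Let q(A) := ∃x∃y (R1(x,'red') ∧ R2(y,'blue') ∧ R3(x,'red',y,'blue',A)) over relations R1 with key A1, R2 with key A2, and R3 with all-attribute key. Let q'(A) be the first-order query obtained from q by additionally requiring ∀z (R1(x,z) → z = 'red') and ∀w (R2(y,w) → w = 'blue'). Then for every instance I and every value a: a ∈ q'(I) if and only if a ∈ q(J) for every repair J of I. (That is, q' computes exactly the consistent answers of q.) -/
/-!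
If every `R1`-fact with key `x` says `red` (and likewise for `y`, `blue` in `R2`), each repair
must keep `(x, red)` and `(y, blue)`, so the witness survives in every repair. Conversely, the
adversarial repair that keeps, for every key, a fact with a value other than `red` (resp. `blue`)
whenever one exists, still answers `a`; its witnesses then have no conflicting facts.
-/

section Repair

variable {α β : Type*}

def IsRepair (R J : Finset (α × β)) : Prop :=
  J ⊆ R ∧ ∀ x, (∃ b, (x, b) ∈ R) → ∃! b, (x, b) ∈ J

theorem IsRepair.mem_of_forall_eq {R J : Finset (α × β)} (hJ : IsRepair R J) {x : α} {c : β}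
    (hx : (x, c) ∈ R) (hc : ∀ z, (x, z) ∈ R → z = c) : (x, c) ∈ J := by
  obtain ⟨b, hb, -⟩ := hJ.2 x ⟨c, hx⟩
  rwa [← hc b (hJ.1 hb)]

theorem isRepair_filter_graph [DecidableEq β] (R : Finset (α × β)) (f : α → β)
    (hf : ∀ x b, (x, b) ∈ R → (x, f x) ∈ R) :
    IsRepair R (R.filter fun p => p.2 = f p.1) := by
  refine ⟨Finset.filter_subset _ _, fun x ⟨b, hb⟩ => ⟨f x, ?_, fun c hc => ?_⟩⟩
  · exact Finset.mem_filter.mpr ⟨hf x b hb, rfl⟩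
  · exact (Finset.mem_filter.mp hc).2

theorem exists_isRepair_avoiding (R : Finset (α × β)) (c : β) :
    ∃ J, IsRepair R J ∧ ∀ x, (x, c) ∈ J → ∀ z, (x, z) ∈ R → z = c := by
  classical
  let f : α → β := fun x => if h : ∃ b, b ≠ c ∧ (x, b) ∈ R then h.choose else c
  have hf : ∀ x b, (x, b) ∈ R → (x, f x) ∈ R := by
    intro x b hb
    by_cases h : ∃ b, b ≠ c ∧ (x, b) ∈ R
    · have hfx : f x = h.choose := dif_pos h
      exact hfx ▸ h.choose_spec.2
    · have hbc : b = c := by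
        by_contra hbc
        exact h ⟨b, hbc, hb⟩
      have hfx : f x = c := dif_neg h
      rwa [hfx, ← hbc]
  refine ⟨_, isRepair_filter_graph R f hf, fun x hx z hz => ?_⟩
  by_contra hzc
  have h : ∃ b, b ≠ c ∧ (x, b) ∈ R := ⟨z, hzc, hz⟩
  have hfx : f x = h.choose := dif_pos h
  exact h.choose_spec.1 ((Finset.mem_filter.mp hx).2.trans hfx).symm

end Repair

theorem stmt9_general {D C : Type*} (red blue : D)
    (R1 R2 : Finset (D × D)) (R3 : Finset (D × D × D × D × C)) :
    ∀ a : C,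
      (∃ x y : D, (x, red) ∈ R1 ∧ (y, blue) ∈ R2 ∧ (x, red, y, blue, a) ∈ R3 ∧
          (∀ z : D, (x, z) ∈ R1 → z = red) ∧ (∀ w : D, (y, w) ∈ R2 → w = blue))
      ↔
      (∀ J1 J2 : Finset (D × D),
          J1 ⊆ R1 → J2 ⊆ R2 →
          (∀ x : D, (∃ b, (x, b) ∈ R1) → ∃! b, (x, b) ∈ J1) →
          (∀ y : D, (∃ b, (y, b) ∈ R2) → ∃! b, (y, b) ∈ J2) →
          ∃ x y : D, (x, red) ∈ J1 ∧ (y, blue) ∈ J2 ∧ (x, red, y, blue, a) ∈ R3) := by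
  intro a
  constructor
  · rintro ⟨x, y, hx, hy, hxya, hx_red, hy_blue⟩ J1 J2 hJ1 hJ2 hk1 hk2
    exact ⟨x, y, IsRepair.mem_of_forall_eq ⟨hJ1, hk1⟩ hx hx_red,
      IsRepair.mem_of_forall_eq ⟨hJ2, hk2⟩ hy hy_blue, hxya⟩
  · intro H
    obtain ⟨J1, ⟨hJ1, hk1⟩, hJ1_red⟩ := exists_isRepair_avoiding R1 red
    obtain ⟨J2, ⟨hJ2, hk2⟩, hJ2_blue⟩ := exists_isRepair_avoiding R2 blue
    obtain ⟨x, y, hx, hy, hxya⟩ := H J1 J2 hJ1 hJ2 hk1 hk2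
    exact ⟨x, y, hJ1 hx, hJ2 hy, hxya, hJ1_red x hx, hJ2_blue y hy⟩

/-- The consistent-answer rewriting `q'` computes exactly the consistent answers of
`q(A) = ∃x∃y (R1(x,'red') ∧ R2(y,'blue') ∧ R3(x,'red',y,'blue',A))`, over the schema
`R1(key A1, B1)`, `R2(key A2, B2)`, `R3` with all-attribute key: a value `a` satisfies
`q'` on `I` iff `a ∈ q(J)` for every repair `J` of `I` (a repair keeps exactly one fact
from each key-equal group of `R1` and of `R2`, and all facts of `R3`). -/
theorem stmt9 {D C : Type*} (red blue : D) (hrb : red ≠ blue)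
    (R1 R2 : Finset (D × D)) (R3 : Finset (D × D × D × D × C)) :
    ∀ a : C,
      (∃ x y : D, (x, red) ∈ R1 ∧ (y, blue) ∈ R2 ∧ (x, red, y, blue, a) ∈ R3 ∧
          (∀ z : D, (x, z) ∈ R1 → z = red) ∧ (∀ w : D, (y, w) ∈ R2 → w = blue))
      ↔
      (∀ J1 J2 : Finset (D × D),
          J1 ⊆ R1 → J2 ⊆ R2 →
          (∀ x : D, (∃ b, (x, b) ∈ R1) → ∃! b, (x, b) ∈ J1) →
          (∀ y : D, (∃ b, (y, b) ∈ R2) → ∃! b, (y, b) ∈ J2) →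
          ∃ x y : D, (x, red) ∈ J1 ∧ (y, blue) ∈ J2 ∧ (x, red, y, blue, a) ∈ R3) :=
  stmt9_general red blue R1 R2 R3
end

section
/- Let q be a conjunctive query (or a union of conjunctive queries) returning numeric values, I an instance over a schema with one key constraint per relation, and Q the aggregation query MIN over q. Let W_glb be a witness to q on I such that no two facts in W_glb are key-equal, and such that q(W_glb) is minimal among all witnesses with this property. Then q(W_glb) is the greatest lower bound of { Q(J) : J a repair of I, q(J) ≠ ∅ }. In particular: (a) there exists a repair J of I with W_glb ⊆ J, hence q(W_glb) ∈ q(J); and (b) no repair J contains a witness W with q(W) < q(W_glb). -/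
/-- `J` contains exactly one fact from each key-equal group (fibers of `g`), i.e. `J` is
a repair under one key constraint per relation. -/
def IsTransversal {F γ : Type*} (g : F → γ) (J : Finset F) : Prop :=
  ∀ j : γ, ∃! f, f ∈ J ∧ g f = j

/-- No two facts of the witness `W` are key-equal. -/
def NoKeyEqualPair {F γ : Type*} (g : F → γ) (W : Finset F) : Prop :=
  ∀ a ∈ W, ∀ b ∈ W, a ≠ b → g a ≠ g b

/-!
A witness without key-equal facts is extended to a repair by keeping its own fact in each
key-equal group it meets and choosing an arbitrary fact in every other group. Conversely,
every witness inside a repair has no key-equal facts, so `q(W_glb)` bounds `Q(J)` from below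
for every repair `J`, and it is attained by the repair extending `W_glb`.
-/

section Repairs

variable {F γ : Type*} (g : F → γ)

theorem IsTransversal.noKeyEqualPair_of_subset {J W : Finset F} (hJ : IsTransversal g J)
    (hWJ : W ⊆ J) : NoKeyEqualPair g W := by
  intro a ha b hb hab hgab
  obtain ⟨f, -, huniq⟩ := hJ (g a)
  exact hab ((huniq a ⟨hWJ ha, rfl⟩).trans (huniq b ⟨hWJ hb, hgab.symm⟩).symm)

theorem exists_rightInverse_fixing {W : Finset F} (hg : Function.Surjective g)
    (hW : NoKeyEqualPair g W) : ∃ c : γ → F, (∀ j, g (c j) = j) ∧ ∀ a ∈ W, c (g a) = a := by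
  classical
  refine ⟨fun j => if h : ∃ a ∈ W, g a = j then h.choose else Function.surjInv hg j,
    fun j => ?_, fun a ha => ?_⟩
  · dsimp only
    split_ifs with h
    exacts [h.choose_spec.2, Function.surjInv_eq hg j]
  · have h : ∃ a' ∈ W, g a' = g a := ⟨a, ha, rfl⟩
    simp only [dif_pos h]
    by_contra hne
    exact hW _ h.choose_spec.1 _ ha hne h.choose_spec.2

theorem isTransversal_image_rightInverse [Fintype F] [DecidableEq F] {c : γ → F}
    (hc : ∀ j, g (c j) = j) : IsTransversal g (Finset.univ.image (c ∘ g)) := by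
  intro j
  refine ⟨c j, ⟨Finset.mem_image.mpr ⟨c j, Finset.mem_univ _, by simp [hc]⟩, hc j⟩, ?_⟩
  rintro _ ⟨hy, rfl⟩
  obtain ⟨f, -, rfl⟩ := Finset.mem_image.mp hy
  simp [hc]

theorem exists_transversal_superset [Fintype F] [DecidableEq F] {W : Finset F}
    (hg : Function.Surjective g) (hW : NoKeyEqualPair g W) :
    ∃ J, IsTransversal g J ∧ W ⊆ J := by
  obtain ⟨c, hc, hcW⟩ := exists_rightInverse_fixing g hg hW
  refine ⟨_, isTransversal_image_rightInverse g hc, fun a ha => ?_⟩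
  exact Finset.mem_image.mpr ⟨a, Finset.mem_univ a, hcW a ha⟩

end Repairs

theorem isLeast_witness_values {F ι : Type*} {w : ι → Finset F} {v : ι → ℝ} {J : Finset F}
    {i0 : ι} (hi0 : w i0 ⊆ J) (hle : ∀ i, w i ⊆ J → v i0 ≤ v i) :
    IsLeast {y : ℝ | ∃ i, w i ⊆ J ∧ v i = y} (v i0) :=
  ⟨⟨i0, hi0, rfl⟩, by rintro _ ⟨i, hi, rfl⟩; exact hle i hi⟩

theorem stmt10_general {F γ ι : Type*} [Fintype F] [DecidableEq F]
    (g : F → γ) (hg : ∀ j : γ, ∃ f, g f = j)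
    (w : ι → Finset F) (v : ι → ℝ) (i0 : ι)
    (h0 : NoKeyEqualPair g (w i0))
    (hmin : ∀ i : ι, NoKeyEqualPair g (w i) → v i0 ≤ v i) :
    (∃ J : Finset F, IsTransversal g J ∧ w i0 ⊆ J) ∧
    (∀ J : Finset F, IsTransversal g J → ∀ i : ι, w i ⊆ J → v i0 ≤ v i) ∧
    IsGLB {x : ℝ | ∃ J : Finset F, IsTransversal g J ∧ (∃ i, w i ⊆ J) ∧
        x = sInf {y : ℝ | ∃ i, w i ⊆ J ∧ v i = y}} (v i0) := by
  have hrepair : ∀ J, IsTransversal g J → ∀ i, w i ⊆ J → v i0 ≤ v i :=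
    fun J hJ i hi => hmin i (hJ.noKeyEqualPair_of_subset g hi)
  obtain ⟨J0, hJ0, hsub⟩ := exists_transversal_superset g hg h0
  refine ⟨⟨J0, hJ0, hsub⟩, hrepair, IsLeast.isGLB ⟨⟨J0, hJ0, ⟨i0, hsub⟩, ?_⟩, ?_⟩⟩
  · exact (isLeast_witness_values hsub (hrepair J0 hJ0)).csInf_eq.symm
  · rintro _ ⟨J, hJ, ⟨i, hi⟩, rfl⟩
    refine le_csInf ⟨v i, i, hi, rfl⟩ ?_
    rintro _ ⟨i', hi', rfl⟩
    exact hrepair J hJ i' hi'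

/-- Let `W_glb` (indexed by `i0`) be a witness of `q` on `I` with no two key-equal facts
whose value is minimal among all such witnesses.  Then (a) some repair contains `W_glb`;
(b) no repair contains a witness of smaller value; and `q(W_glb)` is the greatest lower
bound of `{ Q(J) : J a repair with q(J) ≠ ∅ }`, where `Q(J) = min { v(W) : W ⊆ J }`. -/
theorem stmt10 {F γ ι : Type*} [Fintype F] [DecidableEq F] [Fintype ι]
    (g : F → γ) (hg : ∀ j : γ, ∃ f, g f = j)
    (w : ι → Finset F) (v : ι → ℝ) (i0 : ι)
    (h0 : NoKeyEqualPair g (w i0))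
    (hmin : ∀ i : ι, NoKeyEqualPair g (w i) → v i0 ≤ v i) :
    (∃ J : Finset F, IsTransversal g J ∧ w i0 ⊆ J) ∧
    (∀ J : Finset F, IsTransversal g J → ∀ i : ι, w i ⊆ J → v i0 ≤ v i) ∧
    IsGLB {x : ℝ | ∃ J : Finset F, IsTransversal g J ∧ (∃ i, w i ⊆ J) ∧
        x = sInf {y : ℝ | ∃ i, w i ⊆ J ∧ v i = y}} (v i0) :=
  stmt10_general g hg w v i0 h0 hmin
end

section
/- Let Σ be a set of denial constraints over schema R and I a finite R-instance. Let V be the set of minimal violations of Σ in I, and for each fact f let N^f be the set of near-violations with respect to f. Define the Boolean formula φ over variables x_f (f ∈ I) and p^f_N (f ∈ I, N ∈ N^f) as the conjunction of: (i) for each V ∈ V, the clause (∨_{f ∈ V} ¬x_f); (ii) for each f ∈ I, the clause (x_f ∨ ∨_{N ∈ N^f} p^f_N); (iii) for each f and N ∈ N^f, the equivalence p^f_N ↔ (∧_{g ∈ N} x_g). Then the satisfying assignments of φ are in one-to-one correspondence with the subset repairs of I with respect to Σ, via J = { f : x_f = true }. -/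
/- A consistent `J` is maximal iff every fact `f ∉ J` completes some near-violation `N ⊆ J` to a
minimal violation, because any minimal violation inside `insert f J` must contain `f` and
`V.erase f` is then a near-violation inside `J`. Clause (iii) forces `p^f_N = [N ⊆ J]`, so
clause (ii) says exactly this, while clause (i) says that `J` is consistent. -/

def ConsistentWrt {F : Type*} [DecidableEq F] (𝒱 : Finset (Finset F)) (J : Finset F) : Prop :=
  ∀ Vl ∈ 𝒱, ¬ Vl ⊆ J

def RepairWrt {F : Type*} [DecidableEq F] (𝒱 : Finset (Finset F)) (J : Finset F) : Prop :=
  ConsistentWrt 𝒱 J ∧ ∀ f : F, f ∉ J → ¬ ConsistentWrt 𝒱 (insert f J)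

/-- If `{f}` itself is a minimal violation then `N = ∅` qualifies, playing the role of the
trivial `{f_true}` near-violation. -/
def NearViol {F : Type*} [DecidableEq F] (𝒱 : Finset (Finset F)) (f : F) (N : Finset F) : Prop :=
  ConsistentWrt 𝒱 N ∧ insert f N ∈ 𝒱

section Repairs

variable {F : Type*} [DecidableEq F] {𝒱 : Finset (Finset F)} {J K : Finset F} {f : F}

theorem ConsistentWrt.mono (hJ : ConsistentWrt 𝒱 J) (hKJ : K ⊆ J) : ConsistentWrt 𝒱 K :=
  fun V hV hVK => hJ V hV (hVK.trans hKJ)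

theorem not_consistentWrt_insert_iff (hJ : ConsistentWrt 𝒱 J) :
    ¬ ConsistentWrt 𝒱 (insert f J) ↔ ∃ N, NearViol 𝒱 f N ∧ N ⊆ J := by
  constructor
  · intro h
    obtain ⟨V, hV, hVfJ⟩ : ∃ V ∈ 𝒱, V ⊆ insert f J := by
      simpa [ConsistentWrt] using h
    have hfV : f ∈ V := by
      by_contra hfV
      exact hJ V hV ((Finset.subset_insert_iff_of_notMem hfV).mp hVfJ)
    have hNJ : V.erase f ⊆ J := Finset.subset_insert_iff.mp hVfJ
    exact ⟨V.erase f, ⟨hJ.mono hNJ, by rwa [Finset.insert_erase hfV]⟩, hNJ⟩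
  · rintro ⟨N, ⟨-, hN⟩, hNJ⟩ hcons
    exact hcons _ hN (Finset.insert_subset_insert f hNJ)

theorem repairWrt_iff :
    RepairWrt 𝒱 J ↔ ConsistentWrt 𝒱 J ∧ ∀ f, f ∈ J ∨ ∃ N, NearViol 𝒱 f N ∧ N ⊆ J := by
  refine and_congr_right fun hJ => forall_congr' fun f => ?_
  rw [← not_consistentWrt_insert_iff hJ, or_iff_not_imp_left]

end Repairs

namespace RepairEncoding

variable {F : Type*} [DecidableEq F] (𝒱 : Finset (Finset F))

/-- Values of the variables `x_f` and `p^f_N` of `φ`. -/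
abbrev Assignment : Type _ := (F → Bool) × (∀ f : F, {N : Finset F // NearViol 𝒱 f N} → Bool)

def Satisfies (sp : Assignment 𝒱) : Prop :=
  (∀ Vl ∈ 𝒱, ∃ f ∈ Vl, sp.1 f = false) ∧
  (∀ f : F, sp.1 f = true ∨ ∃ N : {N : Finset F // NearViol 𝒱 f N}, sp.2 f N = true) ∧
  (∀ (f : F) (N : {N : Finset F // NearViol 𝒱 f N}),
    sp.2 f N = true ↔ ∀ a ∈ (N : Finset F), sp.1 a = true)

def ofFinset (J : Finset F) : Assignment 𝒱 :=
  (fun f => decide (f ∈ J), fun _ N => decide ((N : Finset F) ⊆ J))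

variable {𝒱} [Fintype F]

def support (sp : Assignment 𝒱) : Finset F :=
  Finset.univ.filter (fun f => sp.1 f = true)

@[simp]
theorem mem_support {sp : Assignment 𝒱} {f : F} : f ∈ support sp ↔ sp.1 f = true := by
  simp [support]

theorem subset_support_iff {sp : Assignment 𝒱} {N : Finset F} :
    N ⊆ support sp ↔ ∀ a ∈ N, sp.1 a = true := by
  simp only [Finset.subset_iff, mem_support]

theorem consistentWrt_support_iff {sp : Assignment 𝒱} :
    ConsistentWrt 𝒱 (support sp) ↔ ∀ Vl ∈ 𝒱, ∃ f ∈ Vl, sp.1 f = false := by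
  simp [ConsistentWrt, Finset.not_subset]

@[simp]
theorem support_ofFinset (J : Finset F) : support (ofFinset 𝒱 J) = J := by
  ext f
  simp [ofFinset]

theorem Satisfies.ofFinset_support {sp : Assignment 𝒱} (h : Satisfies 𝒱 sp) :
    ofFinset 𝒱 (support sp) = sp := by
  ext f N
  · simp [ofFinset]
  · simp [ofFinset, subset_support_iff, ← h.2.2 f N]

theorem Satisfies.repairWrt_support {sp : Assignment 𝒱} (h : Satisfies 𝒱 sp) :
    RepairWrt 𝒱 (support sp) := by
  refine repairWrt_iff.mpr ⟨consistentWrt_support_iff.mpr h.1, fun f => ?_⟩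
  refine (h.2.1 f).imp mem_support.mpr ?_
  rintro ⟨N, hN⟩
  exact ⟨N, N.2, subset_support_iff.mpr ((h.2.2 f N).mp hN)⟩

theorem RepairWrt.satisfies_ofFinset {J : Finset F} (hJ : RepairWrt 𝒱 J) :
    Satisfies 𝒱 (ofFinset 𝒱 J) := by
  obtain ⟨hcons, hmax⟩ := repairWrt_iff.mp hJ
  refine ⟨?_, fun f => ?_, fun f N => ?_⟩
  · exact consistentWrt_support_iff.mp (by rwa [support_ofFinset])
  · refine (hmax f).imp decide_eq_true ?_
    rintro ⟨N, hN, hNJ⟩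
    exact ⟨⟨N, hN⟩, decide_eq_true hNJ⟩
  · simp only [ofFinset, decide_eq_true_iff, Finset.subset_iff]

def equivRepair : {sp : Assignment 𝒱 // Satisfies 𝒱 sp} ≃ {J : Finset F // RepairWrt 𝒱 J} where
  toFun sp := ⟨support sp.1, sp.2.repairWrt_support⟩
  invFun J := ⟨ofFinset 𝒱 J, RepairWrt.satisfies_ofFinset J.2⟩
  left_inv sp := Subtype.ext sp.2.ofFinset_support
  right_inv J := Subtype.ext (support_ofFinset J.1)

end RepairEncoding

theorem stmt12_general {F : Type*} [Fintype F] [DecidableEq F]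
    (𝒱 : Finset (Finset F)) :
    ∃ e : {sp : (F → Bool) × (∀ f : F, {N : Finset F // NearViol 𝒱 f N} → Bool) //
            (∀ Vl ∈ 𝒱, ∃ f ∈ Vl, sp.1 f = false) ∧
            (∀ f : F, sp.1 f = true ∨ ∃ N : {N : Finset F // NearViol 𝒱 f N}, sp.2 f N = true) ∧
            (∀ (f : F) (N : {N : Finset F // NearViol 𝒱 f N}),
              sp.2 f N = true ↔ ∀ a ∈ (N : Finset F), sp.1 a = true)}
        ≃ {J : Finset F // RepairWrt 𝒱 J},
      ∀ sp, (e sp : Finset F) = Finset.univ.filter (fun f => sp.1.1 f = true) :=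
  ⟨RepairEncoding.equivRepair, fun _ => rfl⟩

/-- The satisfying assignments of the formula `φ` — consisting of (i) a clause
`(∨_{f ∈ V} ¬x_f)` for every minimal violation `V ∈ 𝒱`, (ii) a clause
`(x_f ∨ ∨_{N ∈ N^f} p^f_N)` for every fact `f`, and (iii) the equivalences
`p^f_N ↔ (∧_{g ∈ N} x_g)` — are in one-to-one correspondence with the subset repairs
of `I` w.r.t. `Σ`, via `J = { f : x_f = true }`. -/
theorem stmt12 {F : Type*} [Fintype F] [DecidableEq F]
    (𝒱 : Finset (Finset F))
    (hmin : ∀ Vl ∈ 𝒱, ∀ Vl' ∈ 𝒱, Vl' ⊆ Vl → Vl' = Vl) :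
    ∃ e : {sp : (F → Bool) × (∀ f : F, {N : Finset F // NearViol 𝒱 f N} → Bool) //
            (∀ Vl ∈ 𝒱, ∃ f ∈ Vl, sp.1 f = false) ∧
            (∀ f : F, sp.1 f = true ∨ ∃ N : {N : Finset F // NearViol 𝒱 f N}, sp.2 f N = true) ∧
            (∀ (f : F) (N : {N : Finset F // NearViol 𝒱 f N}),
              sp.2 f N = true ↔ ∀ a ∈ (N : Finset F), sp.1 a = true)}
        ≃ {J : Finset F // RepairWrt 𝒱 J},
      ∀ sp, (e sp : Finset F) = Finset.univ.filter (fun f => sp.1.1 f = true) :=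
  stmt12_general 𝒱
end

section
/- Let I be partitioned into groups G1,...,Gm and let W be a family of witnesses with multiplicities m_W. Then the glb-answer and lub-answer to the scalar COUNT query (glb = min over repairs J of Σ_{W⊆J} m_W and lub = max over repairs J of Σ_{W⊆J} m_W) satisfy: glb + (maximum number of soft clauses weight satisfied subject to hard clauses) = Σ_W m_W, and lub + (minimum number of soft clauses weight satisfied subject to hard clauses) = Σ_W m_W, where the soft clauses are (∨_{f∈W} ¬x_f) with weight m_W and the hard clauses enforce exactly one variable per group. -/
open Finset

/-- `Q(J) = Σ_{W ⊆ J} m_W` (the COUNT answer on repair `J`). -/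
def Qval {F ι : Type*} [Fintype ι] [DecidableEq F]
    (w : ι → Finset F) (m : ι → ℕ) (J : Finset F) : ℕ :=
  ∑ W : ι, if w W ⊆ J then m W else 0

/-- Total weight of the soft clauses `(∨_{f ∈ W} ¬x_f)` (weight `m_W`) satisfied by `s`. -/
def softWeight {F ι : Type*} [Fintype ι]
    (w : ι → Finset F) (m : ι → ℕ) (s : F → Bool) : ℕ :=
  ∑ W : ι, if ∃ f ∈ w W, s f = false then m W else 0

/-
Truth assignments satisfying the hard clauses are exactly the indicator functions of repairs,
and for every assignment `s` each witness `W` is counted exactly once: either `W ⊆ J_s`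
(contributing `m_W` to the COUNT answer) or some fact of `W` is false (satisfying its soft clause).
So `Q(J_s) + softWeight(s) = Σ_W m_W`, and minimising one summand maximises the other.
-/

section ComplementarySets

variable {α : Type*} [AddCommMonoid α] [PartialOrder α] [IsOrderedAddMonoid α]
  {A B : Set α} {N a b : α}

theorem add_eq_of_isLeast_of_isGreatest
    (hAB : ∀ x ∈ A, ∃ y ∈ B, x + y = N) (hBA : ∀ y ∈ B, ∃ x ∈ A, x + y = N)
    (ha : IsLeast A a) (hb : IsGreatest B b) : a + b = N := by
  obtain ⟨y, hyB, hay⟩ := hAB a ha.1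
  obtain ⟨x, hxA, hxb⟩ := hBA b hb.1
  apply le_antisymm
  · calc a + b ≤ x + b := add_le_add_left (ha.2 hxA) b
      _ = N := hxb
  · calc N = a + y := hay.symm
      _ ≤ a + b := add_le_add_right (hb.2 hyB) a

theorem add_eq_of_isGreatest_of_isLeast
    (hAB : ∀ x ∈ A, ∃ y ∈ B, x + y = N) (hBA : ∀ y ∈ B, ∃ x ∈ A, x + y = N)
    (ha : IsGreatest A a) (hb : IsLeast B b) : a + b = N := by
  obtain ⟨y, hyB, hay⟩ := hAB a ha.1
  obtain ⟨x, hxA, hxb⟩ := hBA b hb.1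
  apply le_antisymm
  · calc a + b ≤ a + y := add_le_add_right (hb.2 hyB) a
      _ = N := hay
  · calc N = x + b := hxb.symm
      _ ≤ a + b := add_le_add_left (ha.2 hxA) b

end ComplementarySets

theorem Qval_repOf_add_softWeight {F ι : Type*} [Fintype F] [DecidableEq F] [Fintype ι]
    (w : ι → Finset F) (m : ι → ℕ) (s : F → Bool) :
    Qval w m (repOf s) + softWeight w m s = ∑ W : ι, m W := by
  unfold Qval softWeight
  rw [← Finset.sum_add_distrib]
  refine Finset.sum_congr rfl fun W _ => ?_
  have hsub : w W ⊆ repOf s ↔ ¬∃ f ∈ w W, s f = false := by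
    simp [Finset.subset_iff, repOf]
  by_cases h : w W ⊆ repOf s
  · simp [h, hsub.mp h]
  · simp [h, not_not.mp (mt hsub.mpr h)]

section

variable {F γ : Type*} [DecidableEq F] (g : F → γ)

theorem IsTransversal.satHard {J : Finset F} (hJ : IsTransversal g J) :
    SatHard g (fun f => decide (f ∈ J)) := by
  refine ⟨fun j => ?_, fun u v huv hguv ⟨hu, hv⟩ => ?_⟩
  · obtain ⟨f, ⟨hfJ, hfg⟩, _⟩ := hJ j
    exact ⟨f, hfg, decide_eq_true hfJ⟩
  · obtain ⟨_, _, huniq⟩ := hJ (g u)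
    exact huv ((huniq u ⟨of_decide_eq_true hu, rfl⟩).trans
      (huniq v ⟨of_decide_eq_true hv, hguv.symm⟩).symm)

variable [Fintype F]

theorem repOf_decide_mem (J : Finset F) : repOf (fun f => decide (f ∈ J)) = J := by
  ext f; simp [repOf]

theorem SatHard.isTransversal_repOf {s : F → Bool} (hs : SatHard g s) :
    IsTransversal g (repOf s) := by
  intro j
  obtain ⟨f, hfg, hfs⟩ := hs.1 j
  refine ⟨f, ⟨by simp [repOf, hfs], hfg⟩, fun u ⟨huJ, hug⟩ => ?_⟩
  by_contra hne
  exact hs.2 u f hne (hug.trans hfg.symm) ⟨by simpa [repOf] using huJ, hfs⟩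

variable {ι : Type*} [Fintype ι] (w : ι → Finset F) (m : ι → ℕ)

theorem exists_satHard_Qval_add_softWeight {J : Finset F} (hJ : IsTransversal g J) :
    ∃ s, SatHard g s ∧ Qval w m J + softWeight w m s = ∑ W : ι, m W := by
  refine ⟨_, hJ.satHard, ?_⟩
  simpa only [repOf_decide_mem] using Qval_repOf_add_softWeight w m (fun f => decide (f ∈ J))

theorem exists_isTransversal_Qval_add_softWeight {s : F → Bool} (hs : SatHard g s) :
    ∃ J, IsTransversal g J ∧ Qval w m J + softWeight w m s = ∑ W : ι, m W :=
  ⟨repOf s, hs.isTransversal_repOf, Qval_repOf_add_softWeight w m s⟩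

end

theorem stmt16_general {F γ ι : Type*} [Fintype F] [DecidableEq F] [Fintype ι]
    (g : F → γ)
    (w : ι → Finset F) (m : ι → ℕ) :
    ∀ glbval lubval maxwt minwt : ℕ,
      IsLeast {x : ℕ | ∃ J : Finset F, IsTransversal g J ∧ Qval w m J = x} glbval →
      IsGreatest {x : ℕ | ∃ J : Finset F, IsTransversal g J ∧ Qval w m J = x} lubval →
      IsGreatest {x : ℕ | ∃ s : F → Bool, SatHard g s ∧ softWeight w m s = x} maxwt →
      IsLeast {x : ℕ | ∃ s : F → Bool, SatHard g s ∧ softWeight w m s = x} minwt →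
      glbval + maxwt = (∑ W : ι, m W) ∧ lubval + minwt = (∑ W : ι, m W) := by
  intro glbval lubval maxwt minwt hglb hlub hmax hmin
  have hQ : ∀ x ∈ {x : ℕ | ∃ J : Finset F, IsTransversal g J ∧ Qval w m J = x},
      ∃ y ∈ {x : ℕ | ∃ s : F → Bool, SatHard g s ∧ softWeight w m s = x},
        x + y = ∑ W : ι, m W := by
    rintro _ ⟨J, hJ, rfl⟩
    obtain ⟨s, hs, hsum⟩ := exists_satHard_Qval_add_softWeight g w m hJ
    exact ⟨_, ⟨s, hs, rfl⟩, hsum⟩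
  have hsoft : ∀ y ∈ {x : ℕ | ∃ s : F → Bool, SatHard g s ∧ softWeight w m s = x},
      ∃ x ∈ {x : ℕ | ∃ J : Finset F, IsTransversal g J ∧ Qval w m J = x},
        x + y = ∑ W : ι, m W := by
    rintro _ ⟨s, hs, rfl⟩
    obtain ⟨J, hJ, hsum⟩ := exists_isTransversal_Qval_add_softWeight g w m hs
    exact ⟨_, ⟨J, hJ, rfl⟩, hsum⟩
  exact ⟨add_eq_of_isLeast_of_isGreatest hQ hsoft hglb hmax,
    add_eq_of_isGreatest_of_isLeast hQ hsoft hlub hmin⟩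

/-- For the scalar COUNT query: `glb + (max soft weight subject to hard clauses) = Σ_W m_W`
and `lub + (min soft weight subject to hard clauses) = Σ_W m_W`, where
`glb`/`lub` are the minimum/maximum of `Q(J)` over all repairs `J`. -/
theorem stmt16 {F γ ι : Type*} [Fintype F] [DecidableEq F] [Fintype ι]
    (g : F → γ) (hg : ∀ j : γ, ∃ f, g f = j)
    (w : ι → Finset F) (m : ι → ℕ) (hm : ∀ W, 0 < m W) :
    ∀ glbval lubval maxwt minwt : ℕ,
      IsLeast {x : ℕ | ∃ J : Finset F, IsTransversal g J ∧ Qval w m J = x} glbval →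
      IsGreatest {x : ℕ | ∃ J : Finset F, IsTransversal g J ∧ Qval w m J = x} lubval →
      IsGreatest {x : ℕ | ∃ s : F → Bool, SatHard g s ∧ softWeight w m s = x} maxwt →
      IsLeast {x : ℕ | ∃ s : F → Bool, SatHard g s ∧ softWeight w m s = x} minwt →
      glbval + maxwt = (∑ W : ι, m W) ∧ lubval + minwt = (∑ W : ι, m W) :=
  stmt16_general g w m
end
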